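/- Let P_s be the set of Q-self-adjoint projections P of 𝔤 (P ∘ P = P) whose kernel is a non-toral subalgebra belonging to 𝒦 (equivalently, P = id_𝔤 − π_𝔨 for a non-toral 𝔨 ∈ 𝒦), and let X := {Σ_{i=1}^r λ_i·P_i : r ≥ 1, P_1, …, P_r ∈ P_s with ker P_1 ⊊ ⋯ ⊊ ker P_r, λ_i ≥ 0, Σ_{i=1}^r λ_i = 1}. Then every B ∈ X satisfies tr B > 0, and the map X → 𝕏 sending B to B/tr(B) is a homeomorphism of X onto the nerve 𝕏. -/

import Mathlib

open scoped RealInnerProductSpace Classical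
open Module Set Filter

/-- A Lie bracket on a real inner product space for which every adjoint map
`ad X : y ↦ ⁅X, y⁆` is skew-adjoint with respect to the inner product; this is the
Lie-algebraic model of a compact Lie group with a biinvariant metric. -/
structure CompactLieBracket (L : Type*) [NormedAddCommGroup L] [InnerProductSpace ℝ L] where
  br : L →ₗ[ℝ] L →ₗ[ℝ] L
  br_self : ∀ x : L, br x x = 0
  jacobi : ∀ x y z : L, br x (br y z) + br y (br z x) + br z (br x y) = 0
  skew : ∀ x y z : L, ⟪br x y, z⟫ = ⟪x, br y z⟫

variable {L : Type*} [NormedAddCommGroup L] [InnerProductSpace ℝ L] [FiniteDimensional ℝ L]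
variable (𝔩 : CompactLieBracket L) (H : Submodule ℝ L)

/-- `K` is a Lie subalgebra of `(L, 𝔩.br)`. -/
def IsLieSub (K : Submodule ℝ L) : Prop := ∀ x ∈ K, ∀ y ∈ K, 𝔩.br x y ∈ K

/-- `K` is an intermediate subalgebra: `𝔥 ⊊ 𝔨 ⊊ 𝔤`. -/
def IsIntermediate (K : Submodule ℝ L) : Prop := IsLieSub 𝔩 K ∧ H < K ∧ K < ⊤

/-- `K` is toral: `𝔪_𝔨 = 𝔨 ∩ 𝔪` is an abelian subalgebra of `𝔤` (where `𝔪 = 𝔥ᗮ`). -/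
def IsToral (K : Submodule ℝ L) : Prop := ∀ x ∈ K ⊓ Hᗮ, ∀ y ∈ K ⊓ Hᗮ, 𝔩.br x y = 0

/-- The orthogonal projection of `L` onto `K`, as an endomorphism of `L`. -/
noncomputable def projL (K : Submodule ℝ L) : L →L[ℝ] L :=
  K.subtypeL.comp K.orthogonalProjectionOnto

/-- The endomorphism `A^𝔨 = (dim 𝔤 - dim 𝔨)⁻¹ • (id - π_𝔨)`. -/
noncomputable def Apt (K : Submodule ℝ L) : L →L[ℝ] L :=
  ((finrank ℝ L : ℝ) - (finrank ℝ ↥K : ℝ))⁻¹ • (ContinuousLinearMap.id ℝ L - projL K)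

/-- A flag: a nonempty chain of subalgebras, each strictly containing `𝔥`. -/
def IsFlag (s : Finset (Submodule ℝ L)) : Prop :=
  s.Nonempty ∧ IsChain (· ≤ ·) (s : Set (Submodule ℝ L)) ∧ ∀ K ∈ s, IsLieSub 𝔩 K ∧ H < K

/-- The maximum `max φ` of a flag. -/
noncomputable def flagMax (s : Finset (Submodule ℝ L)) : Submodule ℝ L :=
  sSup (s : Set (Submodule ℝ L))

/-- The minimum (first member `𝔨₁`) of a flag. -/
noncomputable def flagMin (s : Finset (Submodule ℝ L)) : Submodule ℝ L :=
  sInf (s : Set (Submodule ℝ L))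

/-- The flag simplex `Δ_φ` of a (proper) flag. -/
noncomputable def flagSimplex (s : Finset (Submodule ℝ L)) : Set (L →L[ℝ] L) :=
  convexHull ℝ (Apt '' (↑s : Set (Submodule ℝ L)))

/-- The nerve `𝕏`: the union of the flag simplices of all proper non-toral flags. -/
noncomputable def nerve : Set (L →L[ℝ] L) :=
  ⋃ s ∈ { s : Finset (Submodule ℝ L) |
      IsFlag 𝔩 H s ∧ flagMax s ≠ ⊤ ∧ ¬ IsToral 𝔩 H (flagMin s) }, flagSimplex s

/-- `P_s`: self-adjoint projections whose kernel is a non-toral intermediate subalgebra. -/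
def projSet : Set (L →L[ℝ] L) :=
  { P | (∀ x y : L, ⟪P x, y⟫ = ⟪x, P y⟫) ∧ P.comp P = P ∧
      ∃ K : Submodule ℝ L, IsIntermediate 𝔩 H K ∧ ¬ IsToral 𝔩 H K ∧ LinearMap.ker (P : L →ₗ[ℝ] L) = K }

/-- The unnormalized nerve `X`. -/
def nerveXun : Set (L →L[ℝ] L) :=
  { B | ∃ (r : ℕ) (P : Fin r → (L →L[ℝ] L)) (lam : Fin r → ℝ),
      1 ≤ r ∧ (∀ i, P i ∈ projSet 𝔩 H) ∧
      (∀ i j : Fin r, i < j → LinearMap.ker (P i : L →ₗ[ℝ] L) < LinearMap.ker (P j : L →ₗ[ℝ] L)) ∧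
      (∀ i, 0 ≤ lam i) ∧ (∑ i, lam i) = 1 ∧ B = ∑ i, lam i • P i }

/-! Write `P_𝔨 = id - π_𝔨`, the orthogonal projection onto `𝔨ᗮ`. A point of `X` is a convex
combination of the `P_𝔨` along a proper non-toral flag, while `A^𝔨 = P_𝔨 / tr P_𝔨`. Rescaling the
vertices of a simplex by positive factors moves its points only radially, so `B ↦ B / tr B`
carries the simplex spanned by the `P_𝔨` into the flag simplex, which lies in the hyperplane
`tr = 1`, and `C ↦ C / ‖C‖` carries it back: the `P`-simplex lies on the unit sphere of the
operator norm, because every `P_𝔨` has norm at most one and all of them fix the nonzero vectors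
orthogonal to the largest member of the flag. -/

theorem IsChain.exists_strictMono_fin {α : Type*} [PartialOrder α] {s : Finset α}
    (hs : IsChain (· ≤ ·) (s : Set α)) :
    ∃ f : Fin s.card → α, StrictMono f ∧ Finset.univ.image f = s := by
  let : LinearOrder (s : Set α) := hs.linearOrder
  let e := monoEquivOfFin (s : Set α) (k := s.card) (by simp)
  refine ⟨fun i => (e i : α), fun i j hij => e.strictMono hij, ?_⟩
  ext a
  simp only [Finset.mem_image, Finset.mem_univ, true_and]
  exact ⟨fun ⟨i, hi⟩ => hi ▸ (e i).2, fun ha => ⟨e.symm ⟨a, ha⟩, by simp⟩⟩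

open Finset in
theorem exists_weights_of_mem_convexHull_range {ι E : Type*} [Fintype ι] [AddCommGroup E]
    [Module ℝ E] {z : ι → E} (hz : Function.Injective z) {x : E}
    (hx : x ∈ convexHull ℝ (range z)) :
    ∃ w : ι → ℝ, (∀ i, 0 ≤ w i) ∧ ∑ i, w i = 1 ∧ ∑ i, w i • z i = x := by
  rw [← Set.image_univ, ← coe_univ, ← coe_image] at hx
  obtain ⟨w, hw₀, hw₁, hwx⟩ := Finset.mem_convexHull'.1 hx
  rw [sum_image fun i _ j _ h => hz h] at hw₁ hwx
  exact ⟨w ∘ z, fun i => hw₀ _ (mem_image_of_mem _ (mem_univ i)), hw₁, hwx⟩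

open Finset in
theorem exists_pos_smul_mem_convexHull_smul {E : Type*} [AddCommGroup E] [Module ℝ E]
    {s : Finset E} {c : E → ℝ} (hc : ∀ y ∈ s, 0 < c y) {x : E}
    (hx : x ∈ convexHull ℝ (s : Set E)) :
    ∃ t : ℝ, 0 < t ∧ t • x ∈ convexHull ℝ ((fun y => c y • y) '' s) := by
  obtain ⟨w, hw₀, hw₁, rfl⟩ := Finset.mem_convexHull'.1 hx
  have hW₀ : ∀ y ∈ s, 0 ≤ w y / c y := fun y hy => div_nonneg (hw₀ y hy) (hc y hy).le
  have hWpos : 0 < ∑ y ∈ s, w y / c y := by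
    obtain ⟨y, hy, hwy⟩ : ∃ y ∈ s, (0 : ℝ) < w y :=
      exists_lt_of_sum_lt (s := s) (f := fun _ => (0 : ℝ)) (g := w) (by simp [hw₁])
    exact Finset.sum_pos' hW₀ ⟨y, hy, div_pos hwy (hc y hy)⟩
  refine ⟨(∑ y ∈ s, w y / c y)⁻¹, inv_pos.2 hWpos, ?_⟩
  convert s.centerMass_mem_convexHull hW₀ hWpos fun y hy => mem_image_of_mem _ hy using 1
  refine congrArg _ (Finset.sum_congr rfl fun y hy => ?_)
  rw [smul_smul, div_mul_cancel₀ _ (hc y hy).ne']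

theorem inv_smul_mem_convexHull_of_smul_mem {E : Type*} [AddCommGroup E] [Module ℝ E]
    {φ : E → ℝ} (hφ : ∀ a : ℝ, 0 < a → ∀ x, φ (a • x) = a * φ x) {s : Finset E} {t : Set E}
    {c : E → ℝ} (hc : ∀ y ∈ s, 0 < c y) (hst : ∀ y ∈ s, c y • y ∈ t)
    (hφt : ∀ y ∈ convexHull ℝ t, φ y = 1) {x : E} (hx : x ∈ convexHull ℝ (s : Set E)) :
    (φ x)⁻¹ • x ∈ convexHull ℝ t := by
  obtain ⟨a, ha, hax⟩ := exists_pos_smul_mem_convexHull_smul hc hx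
  have hax' : a • x ∈ convexHull ℝ t :=
    convexHull_mono (Set.image_subset_iff.2 hst) hax
  have hφx : a * φ x = 1 := by rw [← hφ a ha, hφt _ hax']
  rwa [← eq_inv_of_mul_eq_one_left hφx]

noncomputable def radialHomeomorph {E : Type*} [NormedAddCommGroup E] [NormedSpace ℝ E]
    (φ : E →L[ℝ] ℝ) {S T : Set E} (hS : ∀ x ∈ S, 0 < φ x ∧ ‖x‖ = 1 ∧ (φ x)⁻¹ • x ∈ T)
    (hT : ∀ y ∈ T, φ y = 1 ∧ ‖y‖⁻¹ • y ∈ S) : S ≃ₜ T where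
  toFun x := ⟨(φ x)⁻¹ • (x : E), (hS x x.2).2.2⟩
  invFun y := ⟨‖(y : E)‖⁻¹ • (y : E), (hT y y.2).2⟩
  left_inv x := by
    obtain ⟨hpos, hnorm, -⟩ := hS x x.2
    ext
    simp only [norm_smul, norm_inv, Real.norm_of_nonneg hpos.le, hnorm, mul_one, inv_inv,
      smul_inv_smul₀ hpos.ne']
  right_inv y := by
    obtain ⟨hφy, -⟩ := hT y y.2
    have hy : ‖(y : E)‖ ≠ 0 := fun h => by simp [norm_eq_zero.1 h] at hφy
    ext
    simp only [map_smul, hφy, smul_eq_mul, mul_one, inv_inv, smul_inv_smul₀ hy]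
  continuous_toFun := (((φ.continuous.comp continuous_subtype_val).inv₀
    fun x => (hS x x.2).1.ne').smul continuous_subtype_val).subtype_mk _
  continuous_invFun := (((continuous_norm.comp continuous_subtype_val).inv₀
    fun y => norm_ne_zero_iff.2 fun h => by simpa [h] using (hT y y.2).1).smul
    continuous_subtype_val).subtype_mk _

section OrthogonalProjection

variable {𝕜 E : Type*} [RCLike 𝕜] [NormedAddCommGroup E] [InnerProductSpace 𝕜 E]
  [FiniteDimensional 𝕜 E]

theorem Submodule.trace_starProjection (U : Submodule 𝕜 E) :
    LinearMap.trace 𝕜 E (U.starProjection : E →ₗ[𝕜] E) = finrank 𝕜 U := by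
  rw [(LinearMap.IsIdempotentElem.isProj_range _
    (ContinuousLinearMap.IsIdempotentElem.toLinearMap U.isIdempotentElem_starProjection)).trace,
    show LinearMap.range (U.starProjection : E →ₗ[𝕜] E) = U from U.range_starProjection]

theorem Submodule.ker_starProjection_orthogonal (U : Submodule 𝕜 E) :
    LinearMap.ker (Uᗮ.starProjection : E →ₗ[𝕜] E) = U := by
  simpa only [Submodule.orthogonal_orthogonal] using Uᗮ.ker_starProjection

theorem Submodule.starProjection_orthogonal_injective :
    Function.Injective fun U : Submodule 𝕜 E => Uᗮ.starProjection := fun U V h => by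
  simpa only [Submodule.ker_starProjection_orthogonal] using
    congrArg (fun P : E →L[𝕜] E => LinearMap.ker (P : E →ₗ[𝕜] E)) h

theorem Submodule.finrank_orthogonal_pos {U : Submodule 𝕜 E} (hU : U ≠ ⊤) :
    0 < finrank 𝕜 Uᗮ :=
  Submodule.one_le_finrank_iff.2 (mt U.orthogonal_eq_bot_iff.1 hU)

theorem LinearMap.IsSymmetricProjection.eq_starProjection_orthogonal_ker {P : E →L[𝕜] E}
    (hP : (P : E →ₗ[𝕜] E).IsSymmetricProjection) :
    P = (LinearMap.ker (P : E →ₗ[𝕜] E))ᗮ.starProjection := by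
  have hrange : (LinearMap.ker (P : E →ₗ[𝕜] E))ᗮ = LinearMap.range (P : E →ₗ[𝕜] E) := by
    rw [← (LinearMap.IsIdempotentElem.isSymmetric_iff_orthogonal_range
      hP.isIdempotentElem).1 hP.isSymmetric, Submodule.orthogonal_orthogonal]
  apply ContinuousLinearMap.coe_injective
  refine hP.ext (Submodule.isSymmetricProjection_starProjection _) ?_
  rw [← hrange]
  exact (Submodule.range_starProjection _).symm

end OrthogonalProjection

def properNonToralFlags : Set (Finset (Submodule ℝ L)) :=
  { s | IsFlag 𝔩 H s ∧ flagMax s ≠ ⊤ ∧ ¬ IsToral 𝔩 H (flagMin s) }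

noncomputable def traceCLM : (L →L[ℝ] L) →L[ℝ] ℝ :=
  LinearMap.toContinuousLinearMap (LinearMap.trace ℝ L ∘ₗ ContinuousLinearMap.coeLM ℝ)

section Nerve

variable {𝔩 H}

omit [FiniteDimensional ℝ L] in
theorem IsToral.mono {K K' : Submodule ℝ L} (hKK' : K ≤ K') (hK' : IsToral 𝔩 H K') :
    IsToral 𝔩 H K :=
  fun x hx y hy => hK' x ⟨hKK' hx.1, hx.2⟩ y ⟨hKK' hy.1, hy.2⟩

theorem mem_projSet_iff {P : L →L[ℝ] L} :
    P ∈ projSet 𝔩 H ↔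
      ∃ K, IsIntermediate 𝔩 H K ∧ ¬ IsToral 𝔩 H K ∧ P = Kᗮ.starProjection := by
  constructor
  · rintro ⟨hsym, hidem, K, hK, hnt, hker⟩
    have hP : (P : L →ₗ[ℝ] L).IsSymmetricProjection :=
      ⟨ContinuousLinearMap.IsIdempotentElem.toLinearMap hidem, hsym⟩
    exact ⟨K, hK, hnt, hker ▸ hP.eq_starProjection_orthogonal_ker⟩
  · rintro ⟨K, hK, hnt, rfl⟩
    exact ⟨Kᗮ.inner_starProjection_left_eq_right, Kᗮ.isIdempotentElem_starProjection, K, hK, hnt,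
      K.ker_starProjection_orthogonal⟩

theorem Apt_eq_inv_finrank_smul (K : Submodule ℝ L) :
    Apt K = (finrank ℝ Kᗮ : ℝ)⁻¹ • Kᗮ.starProjection := by
  rw [Apt, K.starProjection_orthogonal, ← K.finrank_add_finrank_orthogonal, Nat.cast_add,
    add_sub_cancel_left]
  rfl

theorem Apt_eq_inv_trace_smul (K : Submodule ℝ L) :
    Apt K = (LinearMap.trace ℝ L (Kᗮ.starProjection : L →ₗ[ℝ] L))⁻¹ • Kᗮ.starProjection := by
  rw [Kᗮ.trace_starProjection, Apt_eq_inv_finrank_smul]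

theorem trace_starProjection_orthogonal_pos {K : Submodule ℝ L} (hK : K ≠ ⊤) :
    0 < LinearMap.trace ℝ L (Kᗮ.starProjection : L →ₗ[ℝ] L) := by
  rw [Kᗮ.trace_starProjection]
  exact_mod_cast Submodule.finrank_orthogonal_pos hK

theorem norm_Apt {K : Submodule ℝ L} (hK : K ≠ ⊤) : ‖Apt K‖ = (finrank ℝ Kᗮ : ℝ)⁻¹ := by
  rw [Apt_eq_inv_finrank_smul, norm_smul,
    Kᗮ.norm_starProjection (mt K.orthogonal_eq_bot_iff.1 hK), mul_one, norm_inv,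
    Real.norm_natCast]

theorem inv_norm_smul_Apt {K : Submodule ℝ L} (hK : K ≠ ⊤) :
    ‖Apt K‖⁻¹ • Apt K = Kᗮ.starProjection := by
  rw [norm_Apt hK, inv_inv, Apt_eq_inv_finrank_smul, smul_inv_smul₀]
  exact_mod_cast (Submodule.finrank_orthogonal_pos hK).ne'

theorem norm_eq_one_of_mem_convexHull {S : Set (Submodule ℝ L)} {M : Submodule ℝ L}
    (hM : M ≠ ⊤) (hSM : ∀ K ∈ S, K ≤ M) {B : L →L[ℝ] L}
    (hB : B ∈ convexHull ℝ ((fun K : Submodule ℝ L => Kᗮ.starProjection) '' S)) : ‖B‖ = 1 := by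
  have hle : ‖B‖ ≤ 1 := by
    refine mem_closedBall_zero_iff.1 (convexHull_min ?_ (convex_closedBall (0 : L →L[ℝ] L) 1) hB)
    rintro _ ⟨K, -, rfl⟩
    exact mem_closedBall_zero_iff.2 (Kᗮ.starProjection_norm_le)
  obtain ⟨v, hv, hv0⟩ :=
    Submodule.exists_mem_ne_zero_of_ne_bot (mt M.orthogonal_eq_bot_iff.1 hM)
  have hBv : B v = v := by
    refine convexHull_min ?_
      ((convex_singleton v).linear_preimage (ContinuousLinearMap.apply ℝ L v).toLinearMap) hB
    rintro _ ⟨K, hK, rfl⟩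
    exact Kᗮ.starProjection_eq_self_iff.2 (Submodule.orthogonal_le (hSM K hK) hv)
  have hge : ‖v‖ ≤ ‖B‖ * ‖v‖ := by simpa only [hBv] using B.le_opNorm v
  exact le_antisymm hle (le_of_mul_le_mul_right (by simpa using hge) (norm_pos_iff.2 hv0))

theorem trace_pos_of_mem_convexHull {S : Set (Submodule ℝ L)} (hS : ∀ K ∈ S, K ≠ ⊤)
    {B : L →L[ℝ] L} (hB : B ∈ convexHull ℝ ((fun K : Submodule ℝ L => Kᗮ.starProjection) '' S)) :
    0 < LinearMap.trace ℝ L (B : L →ₗ[ℝ] L) := by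
  refine convexHull_min (t := {B : L →L[ℝ] L | 0 < LinearMap.trace ℝ L (B : L →ₗ[ℝ] L)}) ?_
    (convex_halfSpace_gt traceCLM.toLinearMap.isLinear 0) hB
  rintro _ ⟨K, hK, rfl⟩
  exact trace_starProjection_orthogonal_pos (hS K hK)

theorem trace_eq_one_of_mem_flagSimplex {s : Finset (Submodule ℝ L)} (hs : ∀ K ∈ s, K ≠ ⊤)
    {C : L →L[ℝ] L} (hC : C ∈ flagSimplex s) : LinearMap.trace ℝ L (C : L →ₗ[ℝ] L) = 1 := by
  refine convexHull_min (t := {C : L →L[ℝ] L | LinearMap.trace ℝ L (C : L →ₗ[ℝ] L) = 1}) ?_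
    (convex_hyperplane traceCLM.toLinearMap.isLinear 1) hC
  rintro _ ⟨K, hK, rfl⟩
  simp only [Set.mem_ofPred_eq, Apt_eq_inv_trace_smul, ContinuousLinearMap.toLinearMap_smul,
    map_smul, smul_eq_mul, inv_mul_cancel₀ (trace_starProjection_orthogonal_pos (hs K hK)).ne']

omit [FiniteDimensional ℝ L] in
theorem isIntermediate_of_mem_properNonToralFlags {s : Finset (Submodule ℝ L)}
    (hs : s ∈ properNonToralFlags 𝔩 H) {K : Submodule ℝ L} (hK : K ∈ s) :
    IsIntermediate 𝔩 H K ∧ ¬ IsToral 𝔩 H K := by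
  obtain ⟨⟨-, -, hsub⟩, hmax, hmin⟩ := hs
  exact ⟨⟨(hsub K hK).1, (hsub K hK).2, lt_top_iff_ne_top.2 (ne_top_of_le_ne_top hmax
    (le_sSup (Finset.mem_coe.2 hK)))⟩, fun h => hmin (h.mono (sInf_le (Finset.mem_coe.2 hK)))⟩

omit [FiniteDimensional ℝ L] in
theorem image_mem_properNonToralFlags {m : ℕ} {K : Fin (m + 1) → Submodule ℝ L}
    (hK : Monotone K) (hint : ∀ i, IsIntermediate 𝔩 H (K i)) (hnt : ¬ IsToral 𝔩 H (K 0)) :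
    Finset.univ.image K ∈ properNonToralFlags 𝔩 H := by
  have hrange : ((Finset.univ.image K : Finset _) : Set (Submodule ℝ L)) = range K := by simp
  refine ⟨⟨Finset.univ_nonempty.image K, hrange ▸ hK.isChain_range, ?_⟩, ?_, ?_⟩
  · simp only [Finset.mem_image, Finset.mem_univ, true_and]
    rintro _ ⟨i, rfl⟩
    exact ⟨(hint i).1, (hint i).2.1⟩
  · refine ne_top_of_le_ne_top (hint (Fin.last m)).2.2.ne (sSup_le ?_)
    rw [hrange]
    rintro _ ⟨i, rfl⟩
    exact hK (Fin.le_last i)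
  · refine fun h => hnt (h.mono (le_sInf ?_))
    rw [hrange]
    rintro _ ⟨i, rfl⟩
    exact hK (Fin.zero_le i)

theorem mem_nerveXun_iff {B : L →L[ℝ] L} :
    B ∈ nerveXun 𝔩 H ↔ ∃ s ∈ properNonToralFlags 𝔩 H,
      B ∈ convexHull ℝ ((fun K : Submodule ℝ L => Kᗮ.starProjection) '' s) := by
  constructor
  · rintro ⟨r, P, lam, hr, hP, hker, hlam₀, hlam₁, rfl⟩
    choose K hint hnt hPK using fun i => mem_projSet_iff.1 (hP i)
    have hKmono : StrictMono K := fun i j hij => by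
      simpa only [hPK, Submodule.ker_starProjection_orthogonal] using hker i j hij
    obtain ⟨m, rfl⟩ : ∃ m, r = m + 1 := Nat.exists_eq_add_of_le' hr
    refine ⟨_, image_mem_properNonToralFlags hKmono.monotone hint (hnt 0), ?_⟩
    refine mem_convexHull_of_exists_fintype lam P hlam₀ hlam₁ (fun i => ?_) rfl
    exact ⟨K i, by simp, (hPK i).symm⟩
  · rintro ⟨s, hs, hBs⟩
    obtain ⟨f, hf, hfs⟩ := hs.1.2.1.exists_strictMono_fin
    have hfmem : ∀ i, f i ∈ s := fun i => hfs ▸ Finset.mem_image_of_mem f (Finset.mem_univ i)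
    have hinj : Function.Injective fun i => (f i)ᗮ.starProjection :=
      Submodule.starProjection_orthogonal_injective.comp hf.injective
    rw [← hfs, Finset.coe_image, Finset.coe_univ, Set.image_univ, ← Set.range_comp] at hBs
    obtain ⟨w, hw₀, hw₁, rfl⟩ := exists_weights_of_mem_convexHull_range hinj hBs
    refine ⟨s.card, fun i => (f i)ᗮ.starProjection, w, Finset.card_pos.2 hs.1.1,
      fun i => ?_, fun i j hij => ?_, hw₀, hw₁, rfl⟩
    · obtain ⟨hint, hnt⟩ := isIntermediate_of_mem_properNonToralFlags hs (hfmem i)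
      exact mem_projSet_iff.2 ⟨f i, hint, hnt, rfl⟩
    · simpa only [Submodule.ker_starProjection_orthogonal] using hf hij

theorem mem_nerve_iff {C : L →L[ℝ] L} :
    C ∈ nerve 𝔩 H ↔ ∃ s ∈ properNonToralFlags 𝔩 H, C ∈ flagSimplex s :=
  Set.mem_iUnion₂.trans (by simp only [exists_prop]; rfl)

omit [FiniteDimensional ℝ L] in
theorem ne_top_of_mem_properNonToralFlags {s : Finset (Submodule ℝ L)}
    (hs : s ∈ properNonToralFlags 𝔩 H) {K : Submodule ℝ L} (hK : K ∈ s) : K ≠ ⊤ :=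
  (isIntermediate_of_mem_properNonToralFlags hs hK).1.2.2.ne

theorem trace_pos_of_mem_nerveXun {B : L →L[ℝ] L} (hB : B ∈ nerveXun 𝔩 H) :
    0 < LinearMap.trace ℝ L (B : L →ₗ[ℝ] L) := by
  obtain ⟨s, hs, hBs⟩ := mem_nerveXun_iff.1 hB
  exact trace_pos_of_mem_convexHull (fun K => ne_top_of_mem_properNonToralFlags hs) hBs

theorem norm_eq_one_of_mem_nerveXun {B : L →L[ℝ] L} (hB : B ∈ nerveXun 𝔩 H) : ‖B‖ = 1 := by
  obtain ⟨s, hs, hBs⟩ := mem_nerveXun_iff.1 hB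
  exact norm_eq_one_of_mem_convexHull hs.2.1 (fun K => le_sSup) hBs

theorem trace_eq_one_of_mem_nerve {C : L →L[ℝ] L} (hC : C ∈ nerve 𝔩 H) :
    LinearMap.trace ℝ L (C : L →ₗ[ℝ] L) = 1 := by
  obtain ⟨s, hs, hCs⟩ := mem_nerve_iff.1 hC
  exact trace_eq_one_of_mem_flagSimplex (fun K => ne_top_of_mem_properNonToralFlags hs) hCs

theorem inv_trace_smul_mem_nerve {B : L →L[ℝ] L} (hB : B ∈ nerveXun 𝔩 H) :
    (LinearMap.trace ℝ L (B : L →ₗ[ℝ] L))⁻¹ • B ∈ nerve 𝔩 H := by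
  obtain ⟨s, hs, hBs⟩ := mem_nerveXun_iff.1 hB
  have hne : ∀ K ∈ s, K ≠ ⊤ := fun K => ne_top_of_mem_properNonToralFlags hs
  refine mem_nerve_iff.2 ⟨s, hs, inv_smul_mem_convexHull_of_smul_mem
    (s := s.image fun K : Submodule ℝ L => Kᗮ.starProjection) (t := Apt '' s)
    (c := fun P : L →L[ℝ] L => (LinearMap.trace ℝ L (P : L →ₗ[ℝ] L))⁻¹)
    (fun a _ P => by simp) (Finset.forall_mem_image.2 fun K hK => ?_)
    (Finset.forall_mem_image.2 fun K hK => ⟨K, hK, Apt_eq_inv_trace_smul K⟩)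
    (fun C => trace_eq_one_of_mem_flagSimplex hne) (by rwa [Finset.coe_image])⟩
  exact inv_pos.2 (trace_starProjection_orthogonal_pos (hne K hK))

theorem inv_norm_smul_mem_nerveXun {C : L →L[ℝ] L} (hC : C ∈ nerve 𝔩 H) :
    ‖C‖⁻¹ • C ∈ nerveXun 𝔩 H := by
  obtain ⟨s, hs, hCs⟩ := mem_nerve_iff.1 hC
  have hne : ∀ K ∈ s, K ≠ ⊤ := fun K => ne_top_of_mem_properNonToralFlags hs
  refine mem_nerveXun_iff.2 ⟨s, hs, inv_smul_mem_convexHull_of_smul_mem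
    (s := s.image Apt) (t := (fun K : Submodule ℝ L => Kᗮ.starProjection) '' s)
    (c := fun A : L →L[ℝ] L => ‖A‖⁻¹)
    (fun a ha A => by rw [norm_smul, Real.norm_of_nonneg ha.le])
    (Finset.forall_mem_image.2 fun K hK => ?_)
    (Finset.forall_mem_image.2 fun K hK => ⟨K, hK, (inv_norm_smul_Apt (hne K hK)).symm⟩)
    (fun B => norm_eq_one_of_mem_convexHull hs.2.1 fun K => le_sSup) (by rwa [Finset.coe_image])⟩
  rw [norm_Apt (hne K hK), inv_inv]
  exact_mod_cast Submodule.finrank_orthogonal_pos (hne K hK)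

end Nerve

theorem nerveXun_homeomorph_nerve :
    (∀ B ∈ nerveXun 𝔩 H, 0 < LinearMap.trace ℝ L (B : L →ₗ[ℝ] L)) ∧
    ∃ e : ↥(nerveXun 𝔩 H) ≃ₜ ↥(nerve 𝔩 H),
      ∀ B : ↥(nerveXun 𝔩 H),
        ((e B : ↥(nerve 𝔩 H)) : L →L[ℝ] L) =
          (LinearMap.trace ℝ L ((B : L →L[ℝ] L) : L →ₗ[ℝ] L))⁻¹ • (B : L →L[ℝ] L) :=
  ⟨fun _ => trace_pos_of_mem_nerveXun,
    radialHomeomorph traceCLM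
      (fun _ hB => ⟨trace_pos_of_mem_nerveXun hB, norm_eq_one_of_mem_nerveXun hB,
        inv_trace_smul_mem_nerve hB⟩)
      (fun _ hC => ⟨trace_eq_one_of_mem_nerve hC, inv_norm_smul_mem_nerveXun hC⟩),
    fun _ => rfl⟩
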